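/- arXiv:2403.18422 — 4 statements merged into one kernel-verified Lean document; each statement's English description precedes it below -/
import Mathlib

section
/- If R_d : ℝⁿ × ℝⁿ → ℝⁿ × ℝⁿ is a discretization map on ℝⁿ, then its tangent lift R_dᵀ defined by R_dᵀ(x, ẋ, y, ẏ) = (R_d(x,y), D_{(x,y)}R_d (ẋ, ẏ)) is a discretization map on ℝⁿ × ℝⁿ ≅ Tℝⁿ: it satisfies R_dᵀ(x, ẋ, 0, 0) = ((x, ẋ), (x, ẋ)) (after the identification T(ℝⁿ×ℝⁿ) ≅ Tℝⁿ × Tℝⁿ), and the difference of the derivatives at the zero section of its second and first components is the identity on ℝ^{2n}. -/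
open ContinuousLinearMap

section Aux
variable {E : Type*} [NormedAddCommGroup E] [NormedSpace ℝ E]
  {F : Type*} [NormedAddCommGroup F] [NormedSpace ℝ F]

theorem tl_slice_right (f : E × E → F) (hf : ContDiff ℝ (⊤ : ℕ∞) f) (x : E) :
    HasFDerivAt (fun v : E => f (x, v))
      ((fderiv ℝ f (x, 0)).comp (inr ℝ E E)) 0 :=
  ((hf.differentiable (by simp) (x, 0)).hasFDerivAt).comp 0 (hasFDerivAt_prodMk_right x (0 : E))

theorem tl_slice_left (f : E × E → F) (hf : ContDiff ℝ (⊤ : ℕ∞) f) (x : E) :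
    HasFDerivAt (fun u : E => f (u, 0))
      ((fderiv ℝ f (x, 0)).comp (inl ℝ E E)) x :=
  ((hf.differentiable (by simp) (x, 0)).hasFDerivAt).comp x (hasFDerivAt_prodMk_left x (0 : E))

/-- If `f (u,0) = u` for all `u` then the partial derivative in the first slot is the identity. -/
theorem tl_partial_left_id (f : E × E → E) (hf : ContDiff ℝ (⊤ : ℕ∞) f)
    (hid : ∀ u, f (u, 0) = u) (x v : E) :
    fderiv ℝ f (x, 0) (v, 0) = v := by
  have h := tl_slice_left f hf x
  have h2 : (fun u : E => f (u, 0)) = _root_.id := funext fun u => hid u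
  rw [h2] at h
  have h3 := h.unique (hasFDerivAt_id x)
  have : ((fderiv ℝ f (x, 0)).comp (inl ℝ E E)) v = v := by rw [h3]; rfl
  simpa using this

/-- Cancellation of the mixed second-derivative terms. -/
theorem tl_cross (f1 f2 : E × E → E) (h1s : ContDiff ℝ (⊤ : ℕ∞) f1) (h2s : ContDiff ℝ (⊤ : ℕ∞) f2)
    (hk : ∀ (x c : E), fderiv ℝ f2 (x, 0) (0, c) - fderiv ℝ f1 (x, 0) (0, c) = c)
    (x xd c : E) :
    fderiv ℝ (fderiv ℝ f2) (x, 0) (0, c) (xd, 0)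
      = fderiv ℝ (fderiv ℝ f1) (x, 0) (0, c) (xd, 0) := by
  have sym1 : IsSymmSndFDerivAt ℝ f1 (x, 0) :=
    h1s.contDiffAt.isSymmSndFDerivAt (by rw [minSmoothness_of_isRCLikeNormedField]; exact WithTop.coe_le_coe.mpr (le_top : (2 : ℕ∞) ≤ ⊤))
  have sym2 : IsSymmSndFDerivAt ℝ f2 (x, 0) :=
    h2s.contDiffAt.isSymmSndFDerivAt (by rw [minSmoothness_of_isRCLikeNormedField]; exact WithTop.coe_le_coe.mpr (le_top : (2 : ℕ∞) ≤ ⊤))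
  rw [sym2 ((0:E),c) (xd,(0:E)), sym1 ((0:E),c) (xd,(0:E))]
  -- now show fderiv (fderiv f2) (x,0) (xd,0) (0,c) = fderiv (fderiv f1) (x,0) (xd,0) (0,c)
  set g1 := fderiv ℝ f1 with hg1
  set g2 := fderiv ℝ f2 with hg2
  have hg1s : ContDiff ℝ (⊤ : ℕ∞) g1 := h1s.fderiv_right (by simp)
  have hg2s : ContDiff ℝ (⊤ : ℕ∞) g2 := h2s.fderiv_right (by simp)
  have e : (ContinuousLinearMap.apply ℝ E ((0, c) : E × E)) = fun L : E × E →L[ℝ] E => L (0, c) :=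
    rfl
  have hψ1 : HasFDerivAt (fun u : E => (g1 (u, 0)) (0, c))
      (((ContinuousLinearMap.apply ℝ E ((0, c) : E × E))).comp
        ((fderiv ℝ g1 (x, 0)).comp (inl ℝ E E))) x :=
    (ContinuousLinearMap.apply ℝ E ((0, c) : E × E)).hasFDerivAt.comp x (tl_slice_left g1 hg1s x)
  have hψ2 : HasFDerivAt (fun u : E => (g2 (u, 0)) (0, c))
      (((ContinuousLinearMap.apply ℝ E ((0, c) : E × E))).comp
        ((fderiv ℝ g2 (x, 0)).comp (inl ℝ E E))) x :=
    (ContinuousLinearMap.apply ℝ E ((0, c) : E × E)).hasFDerivAt.comp x (tl_slice_left g2 hg2s x)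
  have hdiff : HasFDerivAt (fun u : E => (g2 (u, 0)) (0, c) - (g1 (u, 0)) (0, c))
      ((((ContinuousLinearMap.apply ℝ E ((0, c) : E × E))).comp
        ((fderiv ℝ g2 (x, 0)).comp (inl ℝ E E)))
        - (((ContinuousLinearMap.apply ℝ E ((0, c) : E × E))).comp
        ((fderiv ℝ g1 (x, 0)).comp (inl ℝ E E)))) x := hψ2.sub hψ1
  have hconst : (fun u : E => (g2 (u, 0)) (0, c) - (g1 (u, 0)) (0, c)) = fun _ => c :=
    funext fun u => hk u c
  rw [hconst] at hdiff
  have h0 := hdiff.unique (hasFDerivAt_const c x)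
  have := congrArg (fun L : E →L[ℝ] E => L xd) h0
  simp only [coe_comp', Function.comp_apply, sub_apply, inl_apply,
    ContinuousLinearMap.apply_apply, zero_apply] at this
  have h4 : fderiv ℝ g2 (x, 0) (xd, 0) (0, c) - fderiv ℝ g1 (x, 0) (xd, 0) (0, c) = 0 := this
  exact sub_eq_zero.mp h4

theorem tl_part2 (f1 f2 : E × E → E) (h1s : ContDiff ℝ (⊤ : ℕ∞) f1) (h2s : ContDiff ℝ (⊤ : ℕ∞) f2)
    (hk : ∀ (x c : E), fderiv ℝ f2 (x, 0) (0, c) - fderiv ℝ f1 (x, 0) (0, c) = c)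
    (x xd : E) :
    fderiv ℝ (fun w : E × E => (f2 (x, w.1), fderiv ℝ f2 (x, w.1) (xd, w.2))) 0
      - fderiv ℝ (fun w : E × E => (f1 (x, w.1), fderiv ℝ f1 (x, w.1) (xd, w.2))) 0
      = ContinuousLinearMap.id ℝ (E × E) := by
  have hinner : HasFDerivAt (fun w : E × E => (x, w.1))
      (((0 : (E × E) →L[ℝ] E)).prod (fst ℝ E E)) (0 : E × E) :=
    (hasFDerivAt_const x _).prodMk hasFDerivAt_fst
  have hu : HasFDerivAt (fun w : E × E => (xd, w.2))
      (((0 : (E × E) →L[ℝ] E)).prod (snd ℝ E E)) (0 : E × E) :=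
    (hasFDerivAt_const xd _).prodMk hasFDerivAt_snd
  have key : ∀ (f : E × E → E), ContDiff ℝ (⊤ : ℕ∞) f →
      HasFDerivAt (fun w : E × E => (f (x, w.1), fderiv ℝ f (x, w.1) (xd, w.2)))
        (((fderiv ℝ f (x, 0)).comp ((((0 : (E × E) →L[ℝ] E)).prod (fst ℝ E E)))).prod
          ((fderiv ℝ f (x, 0)).comp ((((0 : (E × E) →L[ℝ] E)).prod (snd ℝ E E)))
            + ((fderiv ℝ (fderiv ℝ f) (x, 0)).comp
                ((((0 : (E × E) →L[ℝ] E)).prod (fst ℝ E E)))).flip (xd, 0)))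
        (0 : E × E) := by
    intro f hf
    have hgs : ContDiff ℝ (⊤ : ℕ∞) (fderiv ℝ f) := hf.fderiv_right (by simp)
    have hA : HasFDerivAt (fun w : E × E => f (x, w.1))
        ((fderiv ℝ f (x, 0)).comp ((((0 : (E × E) →L[ℝ] E)).prod (fst ℝ E E)))) 0 :=
      HasFDerivAt.comp 0 ((hf.differentiable (by simp) (x, 0)).hasFDerivAt) hinner
    have hc : HasFDerivAt (fun w : E × E => fderiv ℝ f (x, w.1))
        ((fderiv ℝ (fderiv ℝ f) (x, 0)).comp ((((0 : (E × E) →L[ℝ] E)).prod (fst ℝ E E)))) 0 :=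
      HasFDerivAt.comp 0 ((hgs.differentiable (by simp) (x, 0)).hasFDerivAt) hinner
    have hB := hc.clm_apply hu
    exact hA.prodMk hB
  rw [(key f2 h2s).fderiv, (key f1 h1s).fderiv]
  apply ContinuousLinearMap.ext
  intro u
  apply Prod.ext
  · simp only [sub_apply, prod_apply, coe_comp', Function.comp_apply, coe_fst', coe_snd',
      ContinuousLinearMap.zero_apply, add_apply, flip_apply, coe_id', id_eq, Prod.fst_sub]
    exact hk x u.1
  · simp only [sub_apply, prod_apply, coe_comp', Function.comp_apply, coe_fst', coe_snd',
      ContinuousLinearMap.zero_apply, add_apply, flip_apply, coe_id', id_eq, Prod.snd_sub]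
    rw [add_sub_add_comm, hk x u.2,
      tl_cross f1 f2 h1s h2s hk x xd u.1, sub_self, add_zero]

end Aux

/-- The tangent lift of a discretization map on ℝⁿ is a discretization map on Tℝⁿ ≅ ℝ^{2n}. -/
theorem tangent_lift_is_discretization (n : ℕ)
    (Rd : (Fin n → ℝ) × (Fin n → ℝ) → (Fin n → ℝ) × (Fin n → ℝ))
    (hsmooth : ContDiff ℝ (⊤ : ℕ∞) Rd)
    (h0 : ∀ x : Fin n → ℝ, Rd (x, 0) = (x, x))
    (h1 : ∀ x : Fin n → ℝ,
      fderiv ℝ (fun v : Fin n → ℝ => (Rd (x, v)).2) 0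
        - fderiv ℝ (fun v : Fin n → ℝ => (Rd (x, v)).1) 0
        = ContinuousLinearMap.id ℝ (Fin n → ℝ)) :
    let V := Fin n → ℝ
    let RdT : (V × V) × (V × V) → (V × V) × (V × V) := fun p =>
      (((Rd (p.1.1, p.2.1)).1,
          fderiv ℝ (fun q : V × V => (Rd q).1) (p.1.1, p.2.1) (p.1.2, p.2.2)),
       ((Rd (p.1.1, p.2.1)).2,
          fderiv ℝ (fun q : V × V => (Rd q).2) (p.1.1, p.2.1) (p.1.2, p.2.2)))
    ∀ z : V × V,
      RdT (z, 0) = (z, z) ∧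
      fderiv ℝ (fun w : V × V => (RdT (z, w)).2) 0
        - fderiv ℝ (fun w : V × V => (RdT (z, w)).1) 0
        = ContinuousLinearMap.id ℝ (V × V) := by
  intro V RdT z
  have hf1 : ContDiff ℝ (⊤ : ℕ∞) (fun q : V × V => (Rd q).1) := contDiff_fst.comp hsmooth
  have hf2 : ContDiff ℝ (⊤ : ℕ∞) (fun q : V × V => (Rd q).2) := contDiff_snd.comp hsmooth
  have hid1 : ∀ u : V, (fun q : V × V => (Rd q).1) (u, 0) = u := fun u => by
    simp [h0 u]
  have hid2 : ∀ u : V, (fun q : V × V => (Rd q).2) (u, 0) = u := fun u => by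
    simp [h0 u]
  have hk : ∀ (x c : V),
      fderiv ℝ (fun q : V × V => (Rd q).2) (x, 0) (0, c)
        - fderiv ℝ (fun q : V × V => (Rd q).1) (x, 0) (0, c) = c := by
    intro x c
    have e1 := (tl_slice_right (fun q : V × V => (Rd q).1) hf1 x).fderiv
    have e2 := (tl_slice_right (fun q : V × V => (Rd q).2) hf2 x).fderiv
    have h := h1 x
    rw [e1, e2] at h
    have := congrArg (fun L : V →L[ℝ] V => L c) h
    simp at this; exact this
  constructor
  · show (((Rd (z.1, (0 : V × V).1)).1,
        fderiv ℝ (fun q : V × V => (Rd q).1) (z.1, (0 : V × V).1) (z.2, (0 : V × V).2)),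
       ((Rd (z.1, (0 : V × V).1)).2,
        fderiv ℝ (fun q : V × V => (Rd q).2) (z.1, (0 : V × V).1) (z.2, (0 : V × V).2))) = (z, z)
    have p1 := tl_partial_left_id _ hf1 hid1 z.1 z.2
    have p2 := tl_partial_left_id _ hf2 hid2 z.1 z.2
    simp only [Prod.fst_zero, Prod.snd_zero, h0 z.1, p1, p2]
    rfl
  · exact tl_part2 (fun q : V × V => (Rd q).1) (fun q : V × V => (Rd q).2) hf1 hf2 hk z.1 z.2
end

section
/- If R_d(x,0) = (x,x) for all x ∈ ℝⁿ and ∂_y(R² − R¹)(x,0) = Id for all x, then the mixed partial derivative ∂_x(∂_y(R² − R¹))(x,0) vanishes, and consequently the Jacobian of the fiber derivative of the tangent lift (R_dᵀ)² − (R_dᵀ)¹ at the zero section equals the identity on ℝ^{2n}. -/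
open ContinuousLinearMap

/-- If `R_d(x,0) = (x,x)` and `∂_y(R² − R¹)(x,0) = Id`, then the mixed partial
`∂_x(∂_y(R² − R¹))(x,0)` vanishes, and the fiber Jacobian at the zero section of
`(R_dᵀ)² − (R_dᵀ)¹` is the identity on ℝ^{2n}. -/
theorem tangent_lift_difference_identity (n : ℕ)
    (Rd : (Fin n → ℝ) × (Fin n → ℝ) → (Fin n → ℝ) × (Fin n → ℝ))
    (hsmooth : ContDiff ℝ (⊤ : ℕ∞) Rd)
    (h0 : ∀ x : Fin n → ℝ, Rd (x, 0) = (x, x))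
    (h1 : ∀ x : Fin n → ℝ,
      fderiv ℝ (fun v : Fin n → ℝ => (Rd (x, v)).2) 0
        - fderiv ℝ (fun v : Fin n → ℝ => (Rd (x, v)).1) 0
        = ContinuousLinearMap.id ℝ (Fin n → ℝ)) :
    let V := Fin n → ℝ
    (∀ x : V,
      fderiv ℝ (fun x' : V =>
        fderiv ℝ (fun y : V => (Rd (x', y)).2 - (Rd (x', y)).1) 0) x = 0) ∧
    (∀ x xdot : V,
      fderiv ℝ (fun w : V × V =>
        ((Rd (x, w.1)).2,
          fderiv ℝ (fun q : V × V => (Rd q).2) (x, w.1) (xdot, w.2))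
        - ((Rd (x, w.1)).1,
            fderiv ℝ (fun q : V × V => (Rd q).1) (x, w.1) (xdot, w.2))) (0, 0)
        = ContinuousLinearMap.id ℝ (V × V)) := by
  intro V
  have hRd : Differentiable ℝ Rd := hsmooth.differentiable (by simp)
  set f : (Fin n → ℝ) × (Fin n → ℝ) → (Fin n → ℝ) := fun q => (Rd q).2 - (Rd q).1 with hf_def
  have hf : ContDiff ℝ (⊤ : ℕ∞) f := hsmooth.snd.sub hsmooth.fst
  have hfd : Differentiable ℝ f := hf.differentiable (by simp)
  -- differentiability of the y-slices of the two components
  have hd2 : ∀ (x' y : Fin n → ℝ), DifferentiableAt ℝ (fun v => (Rd (x', v)).2) y := fun x' y =>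
    ((hRd (x', y)).comp y (DifferentiableAt.prodMk (differentiableAt_const x') differentiableAt_id)).snd
  have hd1 : ∀ (x' y : Fin n → ℝ), DifferentiableAt ℝ (fun v => (Rd (x', v)).1) y := fun x' y =>
    ((hRd (x', y)).comp y (DifferentiableAt.prodMk (differentiableAt_const x') differentiableAt_id)).fst
  -- the inner fiber derivative is the identity, for every x'
  have hinner : ∀ x' : Fin n → ℝ,
      fderiv ℝ (fun y : Fin n → ℝ => (Rd (x', y)).2 - (Rd (x', y)).1) 0
        = ContinuousLinearMap.id ℝ (Fin n → ℝ) := by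
    intro x'
    rw [fderiv_fun_sub (hd2 x' 0) (hd1 x' 0), h1 x']
  -- the full derivative of f at (x,0) is the second projection
  have hA : ∀ x' : Fin n → ℝ,
      fderiv ℝ f (x', 0) = ContinuousLinearMap.snd ℝ (Fin n → ℝ) (Fin n → ℝ) := by
    intro x'
    have hL := (hfd (x', 0)).hasFDerivAt
    -- restriction along the first factor is the zero map
    have hinl : HasFDerivAt (fun a : Fin n → ℝ => ((a, 0) : (Fin n → ℝ) × (Fin n → ℝ)))
        (ContinuousLinearMap.inl ℝ (Fin n → ℝ) (Fin n → ℝ)) x' :=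
      HasFDerivAt.prodMk (hasFDerivAt_id x') (hasFDerivAt_const 0 x')
    have hcomp1 : HasFDerivAt (fun a : Fin n → ℝ => f (a, 0))
        ((fderiv ℝ f (x', 0)).comp (ContinuousLinearMap.inl ℝ _ _)) x' := by have := hL.comp x' hinl; exact this
    have hzero : (fun a : Fin n → ℝ => f (a, 0)) = fun _ => (0 : Fin n → ℝ) := by
      funext a; simp [hf_def, h0 a]
    rw [hzero] at hcomp1
    have h01 : (fderiv ℝ f (x', 0)).comp (ContinuousLinearMap.inl ℝ (Fin n → ℝ) (Fin n → ℝ)) = 0 :=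
      hcomp1.unique (hasFDerivAt_const 0 x')
    -- restriction along the second factor is the identity
    have hinr : HasFDerivAt (fun b : Fin n → ℝ => ((x', b) : (Fin n → ℝ) × (Fin n → ℝ)))
        (ContinuousLinearMap.inr ℝ (Fin n → ℝ) (Fin n → ℝ)) (0 : Fin n → ℝ) :=
      HasFDerivAt.prodMk (hasFDerivAt_const x' 0) (hasFDerivAt_id 0)
    have hcomp2 : HasFDerivAt (fun b : Fin n → ℝ => f (x', b))
        ((fderiv ℝ f (x', 0)).comp (ContinuousLinearMap.inr ℝ _ _)) (0 : Fin n → ℝ) :=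
      hL.comp 0 hinr
    have h02 : (fderiv ℝ f (x', 0)).comp (ContinuousLinearMap.inr ℝ (Fin n → ℝ) (Fin n → ℝ))
        = ContinuousLinearMap.id ℝ (Fin n → ℝ) := by
      rw [← hcomp2.fderiv]
      exact hinner x'
    refine ContinuousLinearMap.ext fun p => ?_
    obtain ⟨u, v⟩ := p
    have hsplit : ((u, v) : (Fin n → ℝ) × (Fin n → ℝ)) = (u, 0) + (0, v) := by simp
    have e1 : fderiv ℝ f (x', 0) (u, 0) = 0 := by
      have := ContinuousLinearMap.ext_iff.1 h01 u
      simpa using this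
    have e2 : fderiv ℝ f (x', 0) (0, v) = v := by
      have := ContinuousLinearMap.ext_iff.1 h02 v
      simpa using this
    rw [hsplit, map_add, e1, e2]
    simp
  -- part 1
  have part1 : ∀ x : Fin n → ℝ,
      fderiv ℝ (fun x' : Fin n → ℝ =>
        fderiv ℝ (fun y : Fin n → ℝ => (Rd (x', y)).2 - (Rd (x', y)).1) 0) x = 0 := by
    intro x
    have : (fun x' : Fin n → ℝ =>
        fderiv ℝ (fun y : Fin n → ℝ => (Rd (x', y)).2 - (Rd (x', y)).1) 0)
        = fun _ => ContinuousLinearMap.id ℝ (Fin n → ℝ) := funext hinner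
    rw [this, fderiv_fun_const]
    rfl
  -- the second derivative
  have hfder : ContDiff ℝ (⊤ : ℕ∞) (fderiv ℝ f) := hf.fderiv_right (by simp)
  have hfderd : Differentiable ℝ (fderiv ℝ f) := hfder.differentiable (by simp)
  -- mixed partial vanishes: D²f(x,0)(u,0) = 0
  have hB : ∀ (x u : Fin n → ℝ), fderiv ℝ (fderiv ℝ f) (x, 0) (u, 0) = 0 := by
    intro x u
    have hinl : HasFDerivAt (fun a : Fin n → ℝ => ((a, 0) : (Fin n → ℝ) × (Fin n → ℝ)))
        (ContinuousLinearMap.inl ℝ (Fin n → ℝ) (Fin n → ℝ)) x :=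
      HasFDerivAt.prodMk (hasFDerivAt_id x) (hasFDerivAt_const 0 x)
    have hcomp : HasFDerivAt (fun a : Fin n → ℝ => fderiv ℝ f (a, 0))
        ((fderiv ℝ (fderiv ℝ f) (x, 0)).comp (ContinuousLinearMap.inl ℝ _ _)) x :=
      (hfderd (x, 0)).hasFDerivAt.comp x hinl
    have hconst : (fun a : Fin n → ℝ => fderiv ℝ f (a, 0))
        = fun _ => ContinuousLinearMap.snd ℝ (Fin n → ℝ) (Fin n → ℝ) := funext hA
    rw [hconst] at hcomp
    have h0' : (fderiv ℝ (fderiv ℝ f) (x, 0)).comp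
        (ContinuousLinearMap.inl ℝ (Fin n → ℝ) (Fin n → ℝ)) = 0 :=
      hcomp.unique (hasFDerivAt_const _ x)
    have := ContinuousLinearMap.ext_iff.1 h0' u
    simpa using this
  refine ⟨part1, ?_⟩
  intro x xdot
  -- symmetry of the second derivative
  have hsymm : ∀ p q : (Fin n → ℝ) × (Fin n → ℝ), fderiv ℝ (fderiv ℝ f) (x, 0) p q
      = fderiv ℝ (fderiv ℝ f) (x, 0) q p :=
    second_derivative_symmetric (fun y => (hfd y).hasFDerivAt)
      ((hfderd (x, 0)).hasFDerivAt)
  -- rewrite the target function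
  have hfun : (fun w : (Fin n → ℝ) × (Fin n → ℝ) =>
        ((Rd (x, w.1)).2, fderiv ℝ (fun q : (Fin n → ℝ) × (Fin n → ℝ) => (Rd q).2) (x, w.1) (xdot, w.2))
        - ((Rd (x, w.1)).1, fderiv ℝ (fun q : (Fin n → ℝ) × (Fin n → ℝ) => (Rd q).1) (x, w.1) (xdot, w.2)))
      = fun w : (Fin n → ℝ) × (Fin n → ℝ) => (f (x, w.1), fderiv ℝ f (x, w.1) (xdot, w.2)) := by
    funext w
    have hsub : fderiv ℝ f (x, w.1) = fderiv ℝ (fun q : (Fin n → ℝ) × (Fin n → ℝ) => (Rd q).2) (x, w.1)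
        - fderiv ℝ (fun q : (Fin n → ℝ) × (Fin n → ℝ) => (Rd q).1) (x, w.1) :=
      fderiv_sub (hRd (x, w.1)).snd (hRd (x, w.1)).fst
    simp [Prod.ext_iff, hf_def, hsub, fderiv_fun_sub (hRd (x, w.1)).snd (hRd (x, w.1)).fst]
  -- derivative of w ↦ (x, w.1)
  have hφ : HasFDerivAt (fun w : (Fin n → ℝ) × (Fin n → ℝ) => ((x, w.1) : (Fin n → ℝ) × (Fin n → ℝ)))
      (ContinuousLinearMap.prod 0 (ContinuousLinearMap.fst ℝ (Fin n → ℝ) (Fin n → ℝ)))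
      ((0, 0) : (Fin n → ℝ) × (Fin n → ℝ)) :=
    HasFDerivAt.prodMk (hasFDerivAt_const x _) hasFDerivAt_fst
  -- first component
  have hΦ1 : HasFDerivAt (fun w : (Fin n → ℝ) × (Fin n → ℝ) => f (x, w.1))
      ((fderiv ℝ f (x, 0)).comp
        (ContinuousLinearMap.prod 0 (ContinuousLinearMap.fst ℝ (Fin n → ℝ) (Fin n → ℝ))))
      ((0, 0) : (Fin n → ℝ) × (Fin n → ℝ)) :=
    by have := (hfd (x, 0)).hasFDerivAt.comp ((0, 0) : (Fin n → ℝ) × (Fin n → ℝ)) hφ; exact this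
  -- second component, via clm_apply
  have hc : HasFDerivAt (fun w : (Fin n → ℝ) × (Fin n → ℝ) => fderiv ℝ f (x, w.1))
      ((fderiv ℝ (fderiv ℝ f) (x, 0)).comp
        (ContinuousLinearMap.prod 0 (ContinuousLinearMap.fst ℝ (Fin n → ℝ) (Fin n → ℝ))))
      ((0, 0) : (Fin n → ℝ) × (Fin n → ℝ)) :=
    (hfderd (x, 0)).hasFDerivAt.comp ((0, 0) : (Fin n → ℝ) × (Fin n → ℝ)) hφ
  have hu : HasFDerivAt (fun w : (Fin n → ℝ) × (Fin n → ℝ) => ((xdot, w.2) : (Fin n → ℝ) × (Fin n → ℝ)))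
      (ContinuousLinearMap.prod 0 (ContinuousLinearMap.snd ℝ (Fin n → ℝ) (Fin n → ℝ)))
      ((0, 0) : (Fin n → ℝ) × (Fin n → ℝ)) :=
    HasFDerivAt.prodMk (hasFDerivAt_const xdot _) hasFDerivAt_snd
  have hΦ2 := hc.clm_apply hu
  have hΦ := HasFDerivAt.prodMk hΦ1 hΦ2
  show fderiv ℝ (fun w : (Fin n → ℝ) × (Fin n → ℝ) =>
        ((Rd (x, w.1)).2,
          fderiv ℝ (fun q : (Fin n → ℝ) × (Fin n → ℝ) => (Rd q).2) (x, w.1) (xdot, w.2))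
        - ((Rd (x, w.1)).1,
            fderiv ℝ (fun q : (Fin n → ℝ) × (Fin n → ℝ) => (Rd q).1) (x, w.1) (xdot, w.2))) (0, 0)
      = ContinuousLinearMap.id ℝ ((Fin n → ℝ) × (Fin n → ℝ))
  rw [hfun, hΦ.fderiv]
  refine ContinuousLinearMap.ext fun p => ?_
  obtain ⟨u, v⟩ := p
  have e1 : fderiv ℝ f (x, 0) ((0 : Fin n → ℝ), u) = u := by rw [hA]; rfl
  have e2 : fderiv ℝ f (x, 0) ((0 : Fin n → ℝ), v) = v := by rw [hA]; rfl
  have e3 : fderiv ℝ (fderiv ℝ f) (x, 0) ((0 : Fin n → ℝ), u) (xdot, (0 : Fin n → ℝ)) = 0 := by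
    rw [hsymm ((0 : Fin n → ℝ), u) (xdot, (0 : Fin n → ℝ)), hB x xdot]
    rfl
  simp [ContinuousLinearMap.prod_apply, ContinuousLinearMap.comp_apply,
    ContinuousLinearMap.add_apply, ContinuousLinearMap.flip_apply, e1, e2, e3]
end

section
/- Let φ : ℝⁿ → ℝⁿ be a diffeomorphism (C∞ with C∞ inverse) and R_d a discretization map on ℝⁿ. Then R_{d,φ} := (φ⁻¹ × φ⁻¹) ∘ R_d ∘ Tφ, where Tφ(x, v) = (φ(x), Dφ(x)v), is a discretization map on ℝⁿ. -/
/-- Pullback of a discretization map along a diffeomorphism: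
`R_{d,φ} = (φ⁻¹ × φ⁻¹) ∘ R_d ∘ Tφ` is a discretization map on ℝⁿ. -/
theorem pullback_discretization (n : ℕ)
    (φ ψ : (Fin n → ℝ) → (Fin n → ℝ))
    (hφ : ContDiff ℝ (⊤ : ℕ∞) φ) (hψ : ContDiff ℝ (⊤ : ℕ∞) ψ)
    (hleft : Function.LeftInverse ψ φ) (hright : Function.RightInverse ψ φ)
    (Rd : (Fin n → ℝ) × (Fin n → ℝ) → (Fin n → ℝ) × (Fin n → ℝ))
    (hsmooth : ContDiff ℝ (⊤ : ℕ∞) Rd)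
    (h0 : ∀ x : Fin n → ℝ, Rd (x, 0) = (x, x))
    (h1 : ∀ x : Fin n → ℝ,
      fderiv ℝ (fun v : Fin n → ℝ => (Rd (x, v)).2) 0
        - fderiv ℝ (fun v : Fin n → ℝ => (Rd (x, v)).1) 0
        = ContinuousLinearMap.id ℝ (Fin n → ℝ)) :
    let V := Fin n → ℝ
    let Rdφ : V × V → V × V := fun p =>
      (ψ (Rd (φ p.1, fderiv ℝ φ p.1 p.2)).1, ψ (Rd (φ p.1, fderiv ℝ φ p.1 p.2)).2)
    (∀ x : V, Rdφ (x, 0) = (x, x)) ∧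
    (∀ x : V,
      fderiv ℝ (fun v : V => (Rdφ (x, v)).2) 0
        - fderiv ℝ (fun v : V => (Rdφ (x, v)).1) 0
        = ContinuousLinearMap.id ℝ V) := by
  intro V Rdφ
  constructor
  · intro x
    show (ψ (Rd (φ x, fderiv ℝ φ x 0)).1, ψ (Rd (φ x, fderiv ℝ φ x 0)).2) = (x, x)
    simp [h0, hleft x]
  · intro x
    set A : V →L[ℝ] V := fderiv ℝ φ x with hAdef
    set B : V →L[ℝ] V := fderiv ℝ ψ (φ x) with hBdef
    have hφx : HasFDerivAt φ A x := (hφ.differentiable (by simp) x).hasFDerivAt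
    have hBx : HasFDerivAt ψ B (φ x) := (hψ.differentiable (by simp) (φ x)).hasFDerivAt
    have hBA : B.comp A = ContinuousLinearMap.id ℝ V := by
      have hcomp : HasFDerivAt (ψ ∘ φ) (B.comp A) x := hBx.comp x hφx
      have hid : (ψ ∘ φ) = id := funext fun y => hleft y
      rw [hid] at hcomp
      exact hcomp.unique (hasFDerivAt_id x)
    have hD : HasFDerivAt Rd (fderiv ℝ Rd (φ x, 0)) (φ x, 0) :=
      (hsmooth.differentiable (by simp) _).hasFDerivAt
    set D : V × V →L[ℝ] V × V := fderiv ℝ Rd (φ x, 0) with hDdef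
    have hins : HasFDerivAt (fun v : V => ((φ x, v) : V × V))
        ((0 : V →L[ℝ] V).prod (ContinuousLinearMap.id ℝ V)) 0 :=
      HasFDerivAt.prodMk (hasFDerivAt_const (φ x) (0 : V)) (hasFDerivAt_id (0 : V))
    set J : V →L[ℝ] V × V := (0 : V →L[ℝ] V).prod (ContinuousLinearMap.id ℝ V) with hJdef
    have hg : HasFDerivAt (fun v : V => Rd (φ x, v)) (D.comp J) 0 := hD.comp 0 hins
    have hg1 : HasFDerivAt (fun v : V => (Rd (φ x, v)).1)
        ((ContinuousLinearMap.fst ℝ V V).comp (D.comp J)) 0 :=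
      (ContinuousLinearMap.fst ℝ V V).hasFDerivAt.comp 0 hg
    have hg2 : HasFDerivAt (fun v : V => (Rd (φ x, v)).2)
        ((ContinuousLinearMap.snd ℝ V V).comp (D.comp J)) 0 :=
      (ContinuousLinearMap.snd ℝ V V).hasFDerivAt.comp 0 hg
    set G1 : V →L[ℝ] V := (ContinuousLinearMap.fst ℝ V V).comp (D.comp J)
    set G2 : V →L[ℝ] V := (ContinuousLinearMap.snd ℝ V V).comp (D.comp J)
    have hG : G2 - G1 = ContinuousLinearMap.id ℝ V := by
      have e1 : fderiv ℝ (fun v : V => (Rd (φ x, v)).1) 0 = G1 := hg1.fderiv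
      have e2 : fderiv ℝ (fun v : V => (Rd (φ x, v)).2) 0 = G2 := hg2.fderiv
      rw [← e1, ← e2]
      exact h1 (φ x)
    have hA0 : HasFDerivAt (fun v : V => A v) A 0 := A.hasFDerivAt
    have hAz : A 0 = 0 := A.map_zero
    have hc1 : HasFDerivAt (fun v : V => (Rd (φ x, A v)).1) (G1.comp A) 0 := by
      have hg1' := hg1; rw [← hAz] at hg1'
      exact hg1'.comp 0 hA0
    have hc2 : HasFDerivAt (fun v : V => (Rd (φ x, A v)).2) (G2.comp A) 0 := by
      have hg2' := hg2; rw [← hAz] at hg2'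
      exact hg2'.comp 0 hA0
    have hval1 : (Rd (φ x, A 0)).1 = φ x := by rw [hAz, h0]
    have hval2 : (Rd (φ x, A 0)).2 = φ x := by rw [hAz, h0]
    have hf1 : HasFDerivAt (fun v : V => ψ ((Rd (φ x, A v)).1)) (B.comp (G1.comp A)) 0 := by
      have hB1 := hBx; rw [← hval1] at hB1
      exact hB1.comp 0 hc1
    have hf2 : HasFDerivAt (fun v : V => ψ ((Rd (φ x, A v)).2)) (B.comp (G2.comp A)) 0 := by
      have hB2 := hBx; rw [← hval2] at hB2
      exact hB2.comp 0 hc2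
    have e1 : fderiv ℝ (fun v : V => (Rdφ (x, v)).1) 0 = B.comp (G1.comp A) := hf1.fderiv
    have e2 : fderiv ℝ (fun v : V => (Rdφ (x, v)).2) 0 = B.comp (G2.comp A) := hf2.fderiv
    rw [e1, e2, ← ContinuousLinearMap.comp_sub, ← ContinuousLinearMap.sub_comp, hG,
      ContinuousLinearMap.id_comp, hBA]
end

section
/- Let φ : ℝⁿ → ℝⁿ be a diffeomorphism and Rᵀ a discretization map on ℝ^{2n} (playing the role of Tℝⁿ). Then Rᵀ_φ := (Tφ × Tφ)⁻¹ ∘ Rᵀ ∘ TTφ is a discretization map on ℝ^{2n}, where Tφ(x,ẋ) = (φ(x), Dφ(x)ẋ) and TTφ is the tangent map of Tφ, i.e., TTφ(x, ẋ, y, ẏ) = (φ(x), Dφ(x)ẋ, Dφ(x)y, D²φ(x)(ẋ, y) + Dφ(x)ẏ). -/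
/-- Pullback of a discretization map on Tℝⁿ ≅ ℝ^{2n} along the tangent lift of a
diffeomorphism: `Rᵀ_φ = (Tφ × Tφ)⁻¹ ∘ Rᵀ ∘ TTφ` is a discretization map on ℝ^{2n}. -/
theorem pullback_tangent_discretization (n : ℕ)
    (φ ψ : (Fin n → ℝ) → (Fin n → ℝ))
    (hφ : ContDiff ℝ (⊤ : ℕ∞) φ) (hψ : ContDiff ℝ (⊤ : ℕ∞) ψ)
    (hleft : Function.LeftInverse ψ φ) (hright : Function.RightInverse ψ φ)
    (RT : ((Fin n → ℝ) × (Fin n → ℝ)) × ((Fin n → ℝ) × (Fin n → ℝ)) →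
          ((Fin n → ℝ) × (Fin n → ℝ)) × ((Fin n → ℝ) × (Fin n → ℝ)))
    (hsmooth : ContDiff ℝ (⊤ : ℕ∞) RT)
    (h0 : ∀ z : (Fin n → ℝ) × (Fin n → ℝ), RT (z, 0) = (z, z))
    (h1 : ∀ z : (Fin n → ℝ) × (Fin n → ℝ),
      fderiv ℝ (fun w : (Fin n → ℝ) × (Fin n → ℝ) => (RT (z, w)).2) 0
        - fderiv ℝ (fun w : (Fin n → ℝ) × (Fin n → ℝ) => (RT (z, w)).1) 0
        = ContinuousLinearMap.id ℝ ((Fin n → ℝ) × (Fin n → ℝ))) :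
    let V := Fin n → ℝ
    -- tangent map of φ and its inverse (the tangent map of ψ = φ⁻¹)
    let Tφinv : V × V → V × V := fun u => (ψ u.1, fderiv ℝ ψ u.1 u.2)
    -- second tangent map TTφ(x, ẋ, y, ẏ) = (φ x, Dφ(x)ẋ, Dφ(x)y, D²φ(x)(ẋ,y) + Dφ(x)ẏ)
    let TTφ : (V × V) × (V × V) → (V × V) × (V × V) := fun p =>
      ((φ p.1.1, fderiv ℝ φ p.1.1 p.1.2),
       (fderiv ℝ φ p.1.1 p.2.1,
        (fderiv ℝ (fun x' : V => fderiv ℝ φ x' p.2.1) p.1.1) p.1.2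
          + fderiv ℝ φ p.1.1 p.2.2))
    let RTφ : (V × V) × (V × V) → (V × V) × (V × V) := fun p =>
      (Tφinv (RT (TTφ p)).1, Tφinv (RT (TTφ p)).2)
    (∀ z : V × V, RTφ (z, 0) = (z, z)) ∧
    (∀ z : V × V,
      fderiv ℝ (fun w : V × V => (RTφ (z, w)).2) 0
        - fderiv ℝ (fun w : V × V => (RTφ (z, w)).1) 0
        = ContinuousLinearMap.id ℝ (V × V)) := by
  intro V Tφinv TTφ RTφ
  have hφi := contDiff_infty_iff_fderiv.mp (hφ.of_le (by simp))
  have hψi := contDiff_infty_iff_fderiv.mp (hψ.of_le (by simp))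
  have hφd : Differentiable ℝ φ := hφi.1
  have hψd : Differentiable ℝ ψ := hψi.1
  have hφ'd : Differentiable ℝ (fderiv ℝ φ) := (contDiff_infty_iff_fderiv.mp hφi.2).1
  have hψ'd : Differentiable ℝ (fderiv ℝ ψ) := (contDiff_infty_iff_fderiv.mp hψi.2).1
  have hRTd : Differentiable ℝ RT := (contDiff_infty_iff_fderiv.mp (hsmooth.of_le (by simp))).1
  -- chain rule identity  Dψ(φ x) ∘ Dφ(x) = id
  have hchain : ∀ x : V, (fderiv ℝ ψ (φ x)).comp (fderiv ℝ φ x)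
      = ContinuousLinearMap.id ℝ V := by
    intro x
    have hcomp : fderiv ℝ (ψ ∘ φ) x = (fderiv ℝ ψ (φ x)).comp (fderiv ℝ φ x) :=
      fderiv_comp x (hψd _) (hφd x)
    have hid : (ψ ∘ φ) = (id : V → V) := funext hleft
    rw [hid, fderiv_id] at hcomp
    exact hcomp.symm
  have hchainpt : ∀ (x v : V), fderiv ℝ ψ (φ x) (fderiv ℝ φ x v) = v := by
    intro x v
    have := congrArg (fun (L : V →L[ℝ] V) => L v) (hchain x)
    simpa using this
  constructor
  · -- first condition
    intro z
    have hTT : TTφ (z, (0 : V × V)) = ((φ z.1, fderiv ℝ φ z.1 z.2), 0) := by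
      show ((φ z.1, fderiv ℝ φ z.1 z.2),
        (fderiv ℝ φ z.1 (0 : V × V).1,
         (fderiv ℝ (fun x' : V => fderiv ℝ φ x' (0 : V × V).1) z.1) z.2
           + fderiv ℝ φ z.1 (0 : V × V).2)) = _
      simp [Prod.ext_iff]
    show (Tφinv (RT (TTφ (z, 0))).1, Tφinv (RT (TTφ (z, 0))).2) = (z, z)
    rw [hTT, h0]
    have hinv : Tφinv (φ z.1, fderiv ℝ φ z.1 z.2) = z := by
      show (ψ (φ z.1), fderiv ℝ ψ (φ z.1) (fderiv ℝ φ z.1 z.2)) = z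
      rw [hleft z.1, hchainpt z.1 z.2]
    rw [hinv]
  · -- second condition
    intro z
    obtain ⟨x, v⟩ := z
    -- abbreviations
    set Dφx : V →L[ℝ] V := fderiv ℝ φ x with hDφx
    set S : V →L[ℝ] V →L[ℝ] V := fderiv ℝ (fderiv ℝ φ) x with hS
    set a : V := φ x with ha
    set Dψa : V →L[ℝ] V := fderiv ℝ ψ a with hDψa
    set Sψ : V →L[ℝ] V →L[ℝ] V := fderiv ℝ (fderiv ℝ ψ) a with hSψ
    set b : V := Dφx v with hb
    set c : V × V := (a, b) with hc
    -- the fiberwise-linear part of TTφ at (x,v)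
    set L : (V × V) →L[ℝ] (V × V) :=
      (Dφx.comp (ContinuousLinearMap.fst ℝ V V)).prod
        (((S v).comp (ContinuousLinearMap.fst ℝ V V))
          + Dφx.comp (ContinuousLinearMap.snd ℝ V V)) with hLdef
    have hL : ∀ w : V × V, TTφ ((x, v), w) = (c, L w) := by
      intro w
      show ((φ x, fderiv ℝ φ x v),
        (fderiv ℝ φ x w.1,
         (fderiv ℝ (fun x' : V => fderiv ℝ φ x' w.1) x) v + fderiv ℝ φ x w.2)) = (c, L w)
      have h2 : fderiv ℝ (fun x' : V => fderiv ℝ φ x' w.1) x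
          = (fderiv ℝ (fderiv ℝ φ) x).flip w.1 := by
        rw [fderiv_clm_apply (hφ'd x) (differentiableAt_const w.1)]
        simp
      rw [h2]
      simp [hc, hLdef, ha, hb, hDφx, hS, Prod.ext_iff]
    -- derivative of Tφinv at c
    set N : (V × V) →L[ℝ] (V × V) :=
      (Dψa.comp (ContinuousLinearMap.fst ℝ V V)).prod
        ((Dψa.comp (ContinuousLinearMap.snd ℝ V V))
          + ((Sψ.comp (ContinuousLinearMap.fst ℝ V V)).flip b)) with hNdef
    have hP1 : HasFDerivAt (fun u : V × V => ψ u.1)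
        (Dψa.comp (ContinuousLinearMap.fst ℝ V V)) c :=
      ((hψd a).hasFDerivAt).comp c hasFDerivAt_fst
    have hcmap : HasFDerivAt (fun u : V × V => fderiv ℝ ψ u.1)
        (Sψ.comp (ContinuousLinearMap.fst ℝ V V)) c :=
      ((hψ'd a).hasFDerivAt).comp c hasFDerivAt_fst
    have hP2 : HasFDerivAt (fun u : V × V => fderiv ℝ ψ u.1 u.2)
        ((Dψa.comp (ContinuousLinearMap.snd ℝ V V))
          + ((Sψ.comp (ContinuousLinearMap.fst ℝ V V)).flip b)) c :=
      hcmap.clm_apply hasFDerivAt_snd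
    have hN : HasFDerivAt Tφinv N c := hP1.prodMk hP2
    -- derivatives of the two components of RT at (c, ·)
    set A₂ : (V × V) →L[ℝ] (V × V) :=
      fderiv ℝ (fun w : V × V => (RT (c, w)).2) 0 with hA₂def
    set A₁ : (V × V) →L[ℝ] (V × V) :=
      fderiv ℝ (fun w : V × V => (RT (c, w)).1) 0 with hA₁def
    have hGd : DifferentiableAt ℝ (fun w : V × V => RT (c, w)) 0 :=
      (hRTd (c, 0)).comp 0 ((differentiableAt_const c).prodMk differentiableAt_id)
    have hA₂ : HasFDerivAt (fun w : V × V => (RT (c, w)).2) A₂ 0 :=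
      hGd.snd.hasFDerivAt
    have hA₁ : HasFDerivAt (fun w : V × V => (RT (c, w)).1) A₁ 0 :=
      hGd.fst.hasFDerivAt
    -- composite derivatives
    have hRTc0 : RT (c, 0) = (c, c) := h0 c
    have hN2 : HasFDerivAt Tφinv N ((RT (c, L 0)).2) := by
      rw [L.map_zero, hRTc0]; exact hN
    have hN1 : HasFDerivAt Tφinv N ((RT (c, L 0)).1) := by
      rw [L.map_zero, hRTc0]; exact hN
    have hA₂' : HasFDerivAt (fun u : V × V => (RT (c, u)).2) A₂ (L 0) := by
      rw [L.map_zero]; exact hA₂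
    have hA₁' : HasFDerivAt (fun u : V × V => (RT (c, u)).1) A₁ (L 0) := by
      rw [L.map_zero]; exact hA₁
    have hstep2 : HasFDerivAt (fun w : V × V => Tφinv ((RT (c, L w)).2))
        (N.comp (A₂.comp L)) 0 :=
      hN2.comp 0 (hA₂'.comp 0 L.hasFDerivAt)
    have hstep1 : HasFDerivAt (fun w : V × V => Tφinv ((RT (c, L w)).1))
        (N.comp (A₁.comp L)) 0 :=
      hN1.comp 0 (hA₁'.comp 0 L.hasFDerivAt)
    have hfun2 : (fun w : V × V => (RTφ ((x, v), w)).2)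
        = fun w : V × V => Tφinv ((RT (c, L w)).2) := by
      funext w
      show Tφinv (RT (TTφ ((x, v), w))).2 = _
      rw [hL w]
    have hfun1 : (fun w : V × V => (RTφ ((x, v), w)).1)
        = fun w : V × V => Tφinv ((RT (c, L w)).1) := by
      funext w
      show Tφinv (RT (TTφ ((x, v), w))).1 = _
      rw [hL w]
    have hfd2 : fderiv ℝ (fun w : V × V => (RTφ ((x, v), w)).2) 0 = N.comp (A₂.comp L) := by
      rw [hfun2]; exact hstep2.fderiv
    have hfd1 : fderiv ℝ (fun w : V × V => (RTφ ((x, v), w)).1) 0 = N.comp (A₁.comp L) := by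
      rw [hfun1]; exact hstep1.fderiv
    -- the key second-derivative identity
    have hsymm : ∀ u w : V, S u w = S w u :=
      second_derivative_symmetric (fun y => (hφd y).hasFDerivAt) (hφ'd x).hasFDerivAt
    have hkey : ∀ u : V, Dψa (S v u) + Sψ (Dφx u) (Dφx v) = 0 := by
      intro u
      have hc1 : HasFDerivAt (fun x' : V => fderiv ℝ ψ (φ x')) (Sψ.comp Dφx) x :=
        ((hψ'd a).hasFDerivAt).comp x (hφd x).hasFDerivAt
      have hd1 : HasFDerivAt (fderiv ℝ φ) S x := (hφ'd x).hasFDerivAt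
      have hK := hc1.clm_comp hd1
      have hKconst : (fun x' : V => (fderiv ℝ ψ (φ x')).comp (fderiv ℝ φ x'))
          = fun _ : V => ContinuousLinearMap.id ℝ V := funext hchain
      rw [hKconst] at hK
      have hzero := hK.unique (hasFDerivAt_const _ _)
      have hzuv := congrArg (fun T : (V →L[ℝ] V →L[ℝ] V) => (T u) v) hzero
      simp only [ContinuousLinearMap.add_apply, ContinuousLinearMap.comp_apply,
        ContinuousLinearMap.compL_apply, ContinuousLinearMap.flip_apply,
        ContinuousLinearMap.zero_apply] at hzuv
      rw [hsymm u v] at hzuv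
      exact hzuv
    -- N ∘ L = id
    have hNL : ∀ w : V × V, N (L w) = w := by
      intro w
      have h1' : Dψa (Dφx w.1) = w.1 := hchainpt x w.1
      have h2' : Dψa (S v w.1 + Dφx w.2) + Sψ (Dφx w.1) b = w.2 := by
        rw [map_add]
        have := hkey w.1
        rw [hb]
        calc Dψa (S v w.1) + Dψa (Dφx w.2) + Sψ (Dφx w.1) (Dφx v)
            = (Dψa (S v w.1) + Sψ (Dφx w.1) (Dφx v)) + Dψa (Dφx w.2) := by abel
          _ = 0 + Dψa (Dφx w.2) := by rw [this]
          _ = w.2 := by rw [zero_add, hchainpt x w.2]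
      show (Dψa (L w).1, Dψa (L w).2 + Sψ (L w).1 b) = w
      have hLw1 : (L w).1 = Dφx w.1 := rfl
      have hLw2 : (L w).2 = S v w.1 + Dφx w.2 := rfl
      rw [hLw1, hLw2, h1', h2']
    rw [hfd2, hfd1]
    refine ContinuousLinearMap.ext fun w => ?_
    have hd : A₂ (L w) - A₁ (L w) = L w := by
      have := congrArg (fun T : (V × V) →L[ℝ] (V × V) => T (L w)) (h1 c)
      simp only [ContinuousLinearMap.sub_apply] at this
      exact this
    have hmain : N (A₂ (L w)) - N (A₁ (L w)) = w := by
      rw [← map_sub N, hd, hNL w]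
    simpa [ContinuousLinearMap.sub_apply, ContinuousLinearMap.comp_apply] using hmain
end
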